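/- Let ρ_A, ρ_B be density matrices on ℂ^n and ρ'_A, ρ'_B be density matrices on ℂ^m. Then, with ⊗ denoting the Kronecker product of matrices, C(ρ_A ⊗ ρ'_A, ρ_B ⊗ ρ'_B) ≥ C(ρ_A, ρ_B) · C(ρ'_A, ρ'_B). -/

import Mathlib

open Matrix BigOperators
open scoped ComplexOrder

/-- A density matrix: positive semidefinite with trace 1. -/
def IsDensityMatrix {d : Type*} [Fintype d] [DecidableEq d]
    (ρ : Matrix d d ℂ) : Prop :=
  ρ.PosSemidef ∧ ρ.trace = 1

/-- The compatibility `C(ρA, ρB)`: the supremum, over all finite families of density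
matrices `σ` and weight vectors `p`, `q` (nonnegative, summing to 1) with
`∑ i, p i • σ i = ρA` and `∑ i, q i • σ i = ρB`, of the Bhattacharyya overlap
`∑ i, √(p i * q i)`. -/
noncomputable def compat {d : Type*} [Fintype d] [DecidableEq d]
    (ρA ρB : Matrix d d ℂ) : ℝ :=
  sSup { c : ℝ | ∃ (m : ℕ) (σ : Fin m → Matrix d d ℂ) (p q : Fin m → ℝ),
    (∀ i, IsDensityMatrix (σ i)) ∧ (∀ i, 0 ≤ p i) ∧ (∀ i, 0 ≤ q i) ∧
    ∑ i, p i = 1 ∧ ∑ i, q i = 1 ∧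
    ∑ i, p i • σ i = ρA ∧ ∑ i, q i • σ i = ρB ∧
    c = ∑ i, Real.sqrt (p i * q i) }

open scoped Classical in
/-- The positive semidefinite square root of a positive semidefinite matrix
(junk value `0` on non-PSD matrices). -/
noncomputable def psdSqrt {d : Type*} [Fintype d] [DecidableEq d]
    (A : Matrix d d ℂ) : Matrix d d ℂ :=
  if h : A.PosSemidef then
    (h.1.eigenvectorUnitary : Matrix d d ℂ) * diagonal ((↑) ∘ (Real.sqrt ∘ h.1.eigenvalues)) *
      (star h.1.eigenvectorUnitary : Matrix d d ℂ)
  else 0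

/-- The fidelity `F(ρA, ρB) = Tr √(√ρA ρB √ρA)`. -/
noncomputable def fidelity {d : Type*} [Fintype d] [DecidableEq d]
    (ρA ρB : Matrix d d ℂ) : ℝ :=
  (psdSqrt (psdSqrt ρA * ρB * psdSqrt ρA)).trace.re

/-- The pure-state density matrix `|ψ⟩⟨ψ|` associated to a vector `ψ`. -/
def pureState {d : Type*} [Fintype d] [DecidableEq d] (ψ : d → ℂ) : Matrix d d ℂ :=
  Matrix.vecMulVec ψ (star ψ)

/-!
If the states `σ i` with weights `p`, `q` decompose `(ρA, ρB)` and the states `σ' j` with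
weights `p'`, `q'` decompose `(ρA', ρB')`, then the product states `σ i ⊗ σ' j` with the
product weights decompose `(ρA ⊗ ρA', ρB ⊗ ρB')`, and the Bhattacharyya overlap of product
weights is the product of the overlaps. So the set of overlaps achievable for the tensor
products contains all products of achievable overlaps; since every overlap lies in `[0, 1]`,
taking suprema gives the inequality.
-/

open Kronecker

theorem Real.sSup_mul_sSup_le {S T U : Set ℝ} (hS : ∀ a ∈ S, 0 ≤ a) (hT : ∀ b ∈ T, 0 ≤ b)
    (hU : BddAbove U) (hU₀ : 0 ≤ sSup U) (hmul : ∀ a ∈ S, ∀ b ∈ T, a * b ∈ U) :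
    sSup S * sSup T ≤ sSup U := by
  have mul_sSup_le : ∀ a ∈ S, a * sSup T ≤ sSup U := by
    intro a ha
    rw [← smul_eq_mul, ← Real.sSup_smul_of_nonneg (hS a ha)]
    refine Real.sSup_le ?_ hU₀
    rintro _ ⟨b, hb, rfl⟩
    exact le_csSup hU (hmul a ha b hb)
  rw [mul_comm, ← smul_eq_mul, ← Real.sSup_smul_of_nonneg (Real.sSup_nonneg hT)]
  refine Real.sSup_le ?_ hU₀
  rintro _ ⟨a, ha, rfl⟩
  exact (mul_comm _ _).trans_le (mul_sSup_le a ha)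

theorem Matrix.sum_smul_kronecker_sum_smul {ι κ l m n o : Type*} [Fintype ι] [Fintype κ]
    (p : ι → ℝ) (σ : ι → Matrix l m ℂ) (p' : κ → ℝ) (σ' : κ → Matrix n o ℂ) :
    (∑ i, p i • σ i) ⊗ₖ (∑ j, p' j • σ' j) =
      ∑ x : ι × κ, (p x.1 * p' x.2) • (σ x.1 ⊗ₖ σ' x.2) := by
  ext ⟨a, b⟩ ⟨a', b'⟩
  simp only [Matrix.sum_apply, Matrix.smul_apply, kroneckerMap_apply, Complex.real_smul,
    Fintype.sum_prod_type, Finset.sum_mul_sum]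
  congr! 2
  push_cast
  ring

section Bhattacharyya

variable {ι κ : Type*} [Fintype ι] [Fintype κ]

noncomputable def bhattacharyya (p q : ι → ℝ) : ℝ := ∑ i, √(p i * q i)

theorem bhattacharyya_nonneg (p q : ι → ℝ) : 0 ≤ bhattacharyya p q :=
  Finset.sum_nonneg fun _ _ => Real.sqrt_nonneg _

theorem bhattacharyya_le_one {p q : ι → ℝ} (hp : ∀ i, 0 ≤ p i) (hq : ∀ i, 0 ≤ q i)
    (hp₁ : ∑ i, p i = 1) (hq₁ : ∑ i, q i = 1) : bhattacharyya p q ≤ 1 :=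
  calc bhattacharyya p q = ∑ i, √(p i) * √(q i) := by
        simp only [bhattacharyya, Real.sqrt_mul (hp _)]
    _ ≤ √(∑ i, p i) * √(∑ i, q i) := Real.sum_sqrt_mul_sqrt_le _ hp hq
    _ = 1 := by rw [hp₁, hq₁, Real.sqrt_one, one_mul]

theorem bhattacharyya_comp_equiv (p q : ι → ℝ) (f : κ ≃ ι) :
    bhattacharyya (p ∘ f) (q ∘ f) = bhattacharyya p q :=
  f.sum_comp fun i => √(p i * q i)

theorem bhattacharyya_prod {p q : ι → ℝ} {p' q' : κ → ℝ} (hp : ∀ i, 0 ≤ p i)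
    (hq : ∀ i, 0 ≤ q i) :
    bhattacharyya (fun x : ι × κ => p x.1 * p' x.2) (fun x => q x.1 * q' x.2) =
      bhattacharyya p q * bhattacharyya p' q' := by
  simp only [bhattacharyya, Fintype.sum_prod_type, Finset.sum_mul_sum,
    ← Real.sqrt_mul (mul_nonneg (hp _) (hq _))]
  congr! 3
  ring

end Bhattacharyya

section JointDecomposition

variable {d e ι κ : Type*} [Fintype d] [DecidableEq d] [Fintype e] [DecidableEq e]
  [Fintype ι] [Fintype κ]

theorem IsDensityMatrix.kronecker {ρ : Matrix d d ℂ} {ρ' : Matrix e e ℂ}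
    (h : IsDensityMatrix ρ) (h' : IsDensityMatrix ρ') : IsDensityMatrix (ρ ⊗ₖ ρ') :=
  ⟨h.1.kronecker h'.1, by rw [trace_kronecker, h.2, h'.2, one_mul]⟩

structure IsJointDecomposition (ρA ρB : Matrix d d ℂ) (σ : ι → Matrix d d ℂ)
    (p q : ι → ℝ) : Prop where
  isDensityMatrix : ∀ i, IsDensityMatrix (σ i)
  p_nonneg : ∀ i, 0 ≤ p i
  q_nonneg : ∀ i, 0 ≤ q i
  sum_p : ∑ i, p i = 1
  sum_q : ∑ i, q i = 1
  sum_p_smul : ∑ i, p i • σ i = ρA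
  sum_q_smul : ∑ i, q i • σ i = ρB

def compatSet (ρA ρB : Matrix d d ℂ) : Set ℝ :=
  { c | ∃ (m : ℕ) (σ : Fin m → Matrix d d ℂ) (p q : Fin m → ℝ),
    IsJointDecomposition ρA ρB σ p q ∧ c = bhattacharyya p q }

theorem compat_eq_sSup_compatSet (ρA ρB : Matrix d d ℂ) :
    compat ρA ρB = sSup (compatSet ρA ρB) := by
  unfold compat compatSet
  congr 1
  ext c
  constructor
  · rintro ⟨m, σ, p, q, hσ, hp, hq, hp₁, hq₁, hpσ, hqσ, rfl⟩
    exact ⟨m, σ, p, q, ⟨hσ, hp, hq, hp₁, hq₁, hpσ, hqσ⟩, rfl⟩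
  · rintro ⟨m, σ, p, q, ⟨hσ, hp, hq, hp₁, hq₁, hpσ, hqσ⟩, rfl⟩
    exact ⟨m, σ, p, q, hσ, hp, hq, hp₁, hq₁, hpσ, hqσ, rfl⟩

theorem nonneg_of_mem_compatSet {ρA ρB : Matrix d d ℂ} {c : ℝ} (hc : c ∈ compatSet ρA ρB) :
    0 ≤ c := by
  obtain ⟨_, _, p, q, _, rfl⟩ := hc
  exact bhattacharyya_nonneg p q

theorem bddAbove_compatSet (ρA ρB : Matrix d d ℂ) : BddAbove (compatSet ρA ρB) := by
  refine ⟨1, ?_⟩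
  rintro _ ⟨_, _, p, q, h, rfl⟩
  exact bhattacharyya_le_one h.p_nonneg h.q_nonneg h.sum_p h.sum_q

namespace IsJointDecomposition

variable {ρA ρB : Matrix d d ℂ} {σ : ι → Matrix d d ℂ} {p q : ι → ℝ}

theorem comp_equiv (h : IsJointDecomposition ρA ρB σ p q) (f : κ ≃ ι) :
    IsJointDecomposition ρA ρB (σ ∘ f) (p ∘ f) (q ∘ f) where
  isDensityMatrix k := h.isDensityMatrix (f k)
  p_nonneg k := h.p_nonneg (f k)
  q_nonneg k := h.q_nonneg (f k)
  sum_p := (f.sum_comp p).trans h.sum_p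
  sum_q := (f.sum_comp q).trans h.sum_q
  sum_p_smul := (f.sum_comp fun i => p i • σ i).trans h.sum_p_smul
  sum_q_smul := (f.sum_comp fun i => q i • σ i).trans h.sum_q_smul

theorem bhattacharyya_mem_compatSet (h : IsJointDecomposition ρA ρB σ p q) :
    bhattacharyya p q ∈ compatSet ρA ρB := by
  let f := (Fintype.equivFin ι).symm
  exact ⟨_, σ ∘ f, p ∘ f, q ∘ f, h.comp_equiv f, (bhattacharyya_comp_equiv p q f).symm⟩

theorem kronecker {ρA' ρB' : Matrix e e ℂ} {σ' : κ → Matrix e e ℂ} {p' q' : κ → ℝ}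
    (h : IsJointDecomposition ρA ρB σ p q) (h' : IsJointDecomposition ρA' ρB' σ' p' q') :
    IsJointDecomposition (ρA ⊗ₖ ρA') (ρB ⊗ₖ ρB') (fun x : ι × κ => σ x.1 ⊗ₖ σ' x.2)
      (fun x => p x.1 * p' x.2) (fun x => q x.1 * q' x.2) where
  isDensityMatrix x := (h.isDensityMatrix x.1).kronecker (h'.isDensityMatrix x.2)
  p_nonneg x := mul_nonneg (h.p_nonneg x.1) (h'.p_nonneg x.2)
  q_nonneg x := mul_nonneg (h.q_nonneg x.1) (h'.q_nonneg x.2)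
  sum_p := by rw [Fintype.sum_prod_type, ← Finset.sum_mul_sum, h.sum_p, h'.sum_p, one_mul]
  sum_q := by rw [Fintype.sum_prod_type, ← Finset.sum_mul_sum, h.sum_q, h'.sum_q, one_mul]
  sum_p_smul := by rw [← h.sum_p_smul, ← h'.sum_p_smul, sum_smul_kronecker_sum_smul]
  sum_q_smul := by rw [← h.sum_q_smul, ← h'.sum_q_smul, sum_smul_kronecker_sum_smul]

end IsJointDecomposition

theorem mul_mem_compatSet_kronecker {ρA ρB : Matrix d d ℂ} {ρA' ρB' : Matrix e e ℂ} {a b : ℝ}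
    (ha : a ∈ compatSet ρA ρB) (hb : b ∈ compatSet ρA' ρB') :
    a * b ∈ compatSet (ρA ⊗ₖ ρA') (ρB ⊗ₖ ρB') := by
  obtain ⟨_, σ, p, q, h, rfl⟩ := ha
  obtain ⟨_, σ', p', q', h', rfl⟩ := hb
  rw [← bhattacharyya_prod h.p_nonneg h.q_nonneg]
  exact (h.kronecker h').bhattacharyya_mem_compatSet

end JointDecomposition

open Kronecker in
theorem compat_kronecker_ge_general {n m : ℕ}
    (ρA ρB : Matrix (Fin n) (Fin n) ℂ) (ρA' ρB' : Matrix (Fin m) (Fin m) ℂ) :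
    compat ρA ρB * compat ρA' ρB' ≤ compat (ρA ⊗ₖ ρA') (ρB ⊗ₖ ρB') := by
  simp only [compat_eq_sSup_compatSet]
  exact Real.sSup_mul_sSup_le (fun _ => nonneg_of_mem_compatSet)
    (fun _ => nonneg_of_mem_compatSet) (bddAbove_compatSet _ _)
    (Real.sSup_nonneg fun _ => nonneg_of_mem_compatSet)
    (fun _ ha _ hb => mul_mem_compatSet_kronecker ha hb)

open Kronecker in
/-- **P7** (multiplicativity). The compatibility of tensor (Kronecker) products
is at least the product of the compatibilities. -/
theorem compat_kronecker_ge {n m : ℕ}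
    (ρA ρB : Matrix (Fin n) (Fin n) ℂ) (ρA' ρB' : Matrix (Fin m) (Fin m) ℂ)
    (hA : IsDensityMatrix ρA) (hB : IsDensityMatrix ρB)
    (hA' : IsDensityMatrix ρA') (hB' : IsDensityMatrix ρB') :
    compat ρA ρB * compat ρA' ρB' ≤ compat (ρA ⊗ₖ ρA') (ρB ⊗ₖ ρB') :=
  compat_kronecker_ge_general ρA ρB ρA' ρB'
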